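/- arXiv:2504.00546 — 2 statements merged into one kernel-verified Lean document; each statement's English description precedes it below -/
import Mathlib

section
/- In ℂ[z1,z2,z3,z4], the determinant of the 4×4 Jacobian matrix whose (i,j) entry is ∂F_i/∂z_j, where (F₁,F₂,F₃,F₄) = (c1⁰, c2⁰, d2⁰, d3⁰) with c1⁰ = −12·I2, c2⁰ = I4 + Ĩ4/4 + 368·I2², d2⁰ = −I4/6 + Ĩ4/48 − (88/3)·I2², d3⁰ = I6/16 + 8·I2·I4 − I2·Ĩ4/2 + 896·I2³, equals (3/8)·∏_{1≤i<j≤4} (zᵢ² − zⱼ²). -/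
set_option maxHeartbeats 4000000
open MvPolynomial Complex

noncomputable def I2 : MvPolynomial (Fin 4) ℂ := ∑ i, X i ^ 2
noncomputable def I4 : MvPolynomial (Fin 4) ℂ :=
  ∑ p ∈ Finset.univ.filter (fun p : Fin 4 × Fin 4 => p.1 < p.2), X p.1 ^ 2 * X p.2 ^ 2
noncomputable def I6 : MvPolynomial (Fin 4) ℂ :=
  ∑ p ∈ Finset.univ.filter (fun p : Fin 4 × Fin 4 × Fin 4 => p.1 < p.2.1 ∧ p.2.1 < p.2.2),
    X p.1 ^ 2 * X p.2.1 ^ 2 * X p.2.2 ^ 2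
noncomputable def I4t : MvPolynomial (Fin 4) ℂ := ∏ i, X i
noncomputable def c1q0 : MvPolynomial (Fin 4) ℂ := -(C (12 : ℂ)) * I2
noncomputable def c2q0 : MvPolynomial (Fin 4) ℂ := I4 + C (1 / 4 : ℂ) * I4t + C (368 : ℂ) * I2 ^ 2
noncomputable def d2q0 : MvPolynomial (Fin 4) ℂ :=
  -(C (1 / 6 : ℂ)) * I4 + C (1 / 48 : ℂ) * I4t - C (88 / 3 : ℂ) * I2 ^ 2
noncomputable def d3q0 : MvPolynomial (Fin 4) ℂ :=
  C (1 / 16 : ℂ) * I6 + C (8 : ℂ) * I2 * I4 - C (1 / 2 : ℂ) * I2 * I4t + C (896 : ℂ) * I2 ^ 3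

noncomputable def P2 : MvPolynomial (Fin 4) ℂ := C 4 * I4 + I4t + C 1472 * I2 ^ 2
noncomputable def P3 : MvPolynomial (Fin 4) ℂ := C (-8) * I4 + I4t + C (-1408) * I2 ^ 2
noncomputable def P4 : MvPolynomial (Fin 4) ℂ :=
  I6 + C 128 * I2 * I4 + C (-8) * I2 * I4t + C 14336 * I2 ^ 3

lemma hc1 : c1q0 = C (-12 : ℂ) * I2 := by
  simp only [c1q0, map_neg]
lemma hc2 : c2q0 = C (1/4 : ℂ) * P2 := by
  simp only [c2q0, P2, mul_add, ← mul_assoc, ← map_mul]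
  norm_num
lemma hd2 : d2q0 = C (1/48 : ℂ) * P3 := by
  simp only [d2q0, P3, mul_add, ← mul_assoc, ← map_mul]
  norm_num
  ring
lemma hd3 : d3q0 = C (1/16 : ℂ) * P4 := by
  simp only [d3q0, P4, mul_add, ← mul_assoc, ← map_mul]
  norm_num
  ring

lemma I2_eq : I2 = X 0^2 + X 1^2 + X 2^2 + X 3^2 := by
  simp [I2, Fin.sum_univ_four]
lemma I4_eq : I4 = X 0^2*X 1^2 + X 0^2*X 2^2 + X 0^2*X 3^2 + X 1^2*X 2^2 + X 1^2*X 3^2 + X 2^2*X 3^2 := by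
  rw [I4, show (Finset.univ.filter (fun p : Fin 4 × Fin 4 => p.1 < p.2)) =
    {(0,1),(0,2),(0,3),(1,2),(1,3),(2,3)} from by decide]
  simp; ring
lemma I6_eq : I6 = X 0^2*X 1^2*X 2^2 + X 0^2*X 1^2*X 3^2 + X 0^2*X 2^2*X 3^2 + X 1^2*X 2^2*X 3^2 := by
  rw [I6, show (Finset.univ.filter (fun p : Fin 4 × Fin 4 × Fin 4 => p.1 < p.2.1 ∧ p.2.1 < p.2.2)) =
    {(0,1,2),(0,1,3),(0,2,3),(1,2,3)} from by decide]
  simp; ring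
lemma I4t_eq : I4t = X 0 * X 1 * X 2 * X 3 := by
  simp [I4t, Fin.prod_univ_four]

/-- Jacobian of the basic invariants. -/
noncomputable def Jm : Matrix (Fin 4) (Fin 4) (MvPolynomial (Fin 4) ℂ) :=
  Matrix.of fun i j => MvPolynomial.pderiv j (![I2, I4, I4t, I6] i)

noncomputable def Am : Matrix (Fin 4) (Fin 4) (MvPolynomial (Fin 4) ℂ) :=
  !![1, 0, 0, 0;
     C 2944 * I2, C 4, 1, 0;
     C (-2816) * I2, C (-8), 1, 0;
     C 128 * I4 + C (-8) * I4t + C 43008 * I2 ^ 2, C 128 * I2, C (-8) * I2, 1]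



lemma hfact :
    (Matrix.of fun i j : Fin 4 => MvPolynomial.pderiv j (![I2, P2, P3, P4] i)) = Am * Jm := by
  apply Matrix.ext
  intro i j
  rw [Matrix.mul_apply, Fin.sum_univ_four]
  fin_cases i <;> fin_cases j <;>
  · try simp only [Fin.zero_eta, Fin.mk_one, show (⟨2, by norm_num⟩ : Fin 4) = 2 from rfl,
      show (⟨3, by norm_num⟩ : Fin 4) = 3 from rfl]
    try simp only [Am, Jm, P2, P3, P4, I2_eq, I4_eq, I6_eq, I4t_eq, Matrix.of_apply,
      Matrix.cons_val', Matrix.cons_val_zero, Matrix.cons_val_one, Matrix.head_cons,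
      Matrix.cons_val_two, Matrix.cons_val_three, Matrix.tail_cons, Matrix.empty_val',
      Matrix.cons_val_fin_one, Matrix.head_fin_const, Fin.isValue]
    try simp only [map_add, map_sub, map_neg, map_mul, Derivation.leibniz, pderiv_pow, pderiv_C,
      pderiv_X_self, pderiv_X_of_ne (by decide : (0:Fin 4) ≠ 1),
      pderiv_X_of_ne (by decide : (0:Fin 4) ≠ 2), pderiv_X_of_ne (by decide : (0:Fin 4) ≠ 3),
      pderiv_X_of_ne (by decide : (1:Fin 4) ≠ 0), pderiv_X_of_ne (by decide : (1:Fin 4) ≠ 2),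
      pderiv_X_of_ne (by decide : (1:Fin 4) ≠ 3), pderiv_X_of_ne (by decide : (2:Fin 4) ≠ 0),
      pderiv_X_of_ne (by decide : (2:Fin 4) ≠ 1), pderiv_X_of_ne (by decide : (2:Fin 4) ≠ 3),
      pderiv_X_of_ne (by decide : (3:Fin 4) ≠ 0), pderiv_X_of_ne (by decide : (3:Fin 4) ≠ 1),
      pderiv_X_of_ne (by decide : (3:Fin 4) ≠ 2), smul_eq_mul, mul_zero, zero_mul, mul_one,
      one_mul, add_zero, zero_add, sub_zero, smul_zero, zero_smul]
    try simp only [map_ofNat, map_neg, map_one, smul_eq_mul]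
    try ring

lemma detAm : Am.det = C (12 : ℂ) := by
  simp [Matrix.det_succ_row_zero, Fin.sum_univ_succ, Am]
  try rw [show ((12:ℂ)) = 4 + 8 by norm_num, map_add, map_ofNat, map_ofNat]
  try ring

theorem my_det_fin_four {R : Type*} [CommRing R] (M : Matrix (Fin 4) (Fin 4) R) :
    M.det =
      M 0 0 * (M 1 1 * (M 2 2 * M 3 3 - M 2 3 * M 3 2)
        - M 1 2 * (M 2 1 * M 3 3 - M 2 3 * M 3 1)
        + M 1 3 * (M 2 1 * M 3 2 - M 2 2 * M 3 1))
      - M 0 1 * (M 1 0 * (M 2 2 * M 3 3 - M 2 3 * M 3 2)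
        - M 1 2 * (M 2 0 * M 3 3 - M 2 3 * M 3 0)
        + M 1 3 * (M 2 0 * M 3 2 - M 2 2 * M 3 0))
      + M 0 2 * (M 1 0 * (M 2 1 * M 3 3 - M 2 3 * M 3 1)
        - M 1 1 * (M 2 0 * M 3 3 - M 2 3 * M 3 0)
        + M 1 3 * (M 2 0 * M 3 1 - M 2 1 * M 3 0))
      - M 0 3 * (M 1 0 * (M 2 1 * M 3 2 - M 2 2 * M 3 1)
        - M 1 1 * (M 2 0 * M 3 2 - M 2 2 * M 3 0)
        + M 1 2 * (M 2 0 * M 3 1 - M 2 1 * M 3 0)) := by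
  rw [Matrix.det_succ_row_zero]
  simp [Fin.sum_univ_succ, Matrix.det_fin_three, Fin.succAbove,
    show (Fin.succ 0 : Fin 4) = 1 from rfl, show (Fin.succ 1 : Fin 4) = 2 from rfl,
    show (Fin.succ 2 : Fin 4) = 3 from rfl, show (Fin.castSucc 2 : Fin 4) = 2 from rfl,
    show (Fin.castSucc 1 : Fin 4) = 1 from rfl, show (Fin.castSucc 0 : Fin 4) = 0 from rfl,
    show ((1:Fin 4) < 3) from by decide, show ((0:Fin 4) < 1) from by decide,
    show ((0:Fin 4) < 2) from by decide, show ((0:Fin 4) < 3) from by decide,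
    show ((1:Fin 4) < 2) from by decide, show ((2:Fin 4) < 3) from by decide]
  ring

lemma Jm_eq : Jm =
    !![C 2 * X 0, C 2 * X 1, C 2 * X 2, C 2 * X 3;
       C 2 * X 0 * (X 1^2 + X 2^2 + X 3^2), C 2 * X 1 * (X 0^2 + X 2^2 + X 3^2),
         C 2 * X 2 * (X 0^2 + X 1^2 + X 3^2), C 2 * X 3 * (X 0^2 + X 1^2 + X 2^2);
       X 1 * X 2 * X 3, X 0 * X 2 * X 3, X 0 * X 1 * X 3, X 0 * X 1 * X 2;
       C 2 * X 0 * (X 1^2*X 2^2 + X 1^2*X 3^2 + X 2^2*X 3^2),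
         C 2 * X 1 * (X 0^2*X 2^2 + X 0^2*X 3^2 + X 2^2*X 3^2),
         C 2 * X 2 * (X 0^2*X 1^2 + X 0^2*X 3^2 + X 1^2*X 3^2),
         C 2 * X 3 * (X 0^2*X 1^2 + X 0^2*X 2^2 + X 1^2*X 2^2)] := by
  apply Matrix.ext
  intro i j
  fin_cases i <;> fin_cases j <;>
  · try simp only [Fin.zero_eta, Fin.mk_one, show (⟨2, by norm_num⟩ : Fin 4) = 2 from rfl,
      show (⟨3, by norm_num⟩ : Fin 4) = 3 from rfl]
    try simp only [Jm, I2_eq, I4_eq, I6_eq, I4t_eq, Matrix.of_apply,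
      Matrix.cons_val', Matrix.cons_val_zero, Matrix.cons_val_one, Matrix.head_cons,
      Matrix.cons_val_two, Matrix.cons_val_three, Matrix.tail_cons, Matrix.empty_val',
      Matrix.cons_val_fin_one, Matrix.head_fin_const, Fin.isValue]
    try simp only [map_add, map_sub, map_neg, map_mul, Derivation.leibniz, pderiv_pow, pderiv_C,
      pderiv_X_self, pderiv_X_of_ne (by decide : (0:Fin 4) ≠ 1),
      pderiv_X_of_ne (by decide : (0:Fin 4) ≠ 2), pderiv_X_of_ne (by decide : (0:Fin 4) ≠ 3),
      pderiv_X_of_ne (by decide : (1:Fin 4) ≠ 0), pderiv_X_of_ne (by decide : (1:Fin 4) ≠ 2),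
      pderiv_X_of_ne (by decide : (1:Fin 4) ≠ 3), pderiv_X_of_ne (by decide : (2:Fin 4) ≠ 0),
      pderiv_X_of_ne (by decide : (2:Fin 4) ≠ 1), pderiv_X_of_ne (by decide : (2:Fin 4) ≠ 3),
      pderiv_X_of_ne (by decide : (3:Fin 4) ≠ 0), pderiv_X_of_ne (by decide : (3:Fin 4) ≠ 1),
      pderiv_X_of_ne (by decide : (3:Fin 4) ≠ 2), smul_eq_mul, mul_zero, zero_mul, mul_one,
      one_mul, add_zero, zero_add, sub_zero, smul_zero, zero_smul]
    try simp only [map_ofNat, map_neg, map_one]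
    try ring

lemma detJm : Jm.det
    = C (-8 : ℂ) *
        ∏ p ∈ ({((0:Fin 4),(1:Fin 4)),(0,2),(0,3),(1,2),(1,3),(2,3)} : Finset (Fin 4 × Fin 4)),
          (X p.1 ^ 2 - X p.2 ^ 2) := by
  rw [Finset.prod_insert (by decide), Finset.prod_insert (by decide),
    Finset.prod_insert (by decide), Finset.prod_insert (by decide),
    Finset.prod_insert (by decide), Finset.prod_singleton]
  rw [Jm_eq, my_det_fin_four]
  simp only [Matrix.of_apply, Matrix.cons_val', Matrix.cons_val_zero, Matrix.cons_val_one,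
    Matrix.head_cons, Matrix.cons_val_two, Matrix.cons_val_three, Matrix.tail_cons,
    Matrix.empty_val', Matrix.cons_val_fin_one, Matrix.head_fin_const]
  try simp only [map_ofNat, map_neg, map_one,
    show (C (2:ℂ) : MvPolynomial (Fin 4) ℂ) = 2 from map_ofNat C 2,
    show (C (-8:ℂ) : MvPolynomial (Fin 4) ℂ) = -8 from by
      rw [show ((-8:ℂ)) = -(8:ℂ) by norm_num, map_neg, map_ofNat]]
  ring

/-- The Jacobian determinant of `(c1⁰, c2⁰, d2⁰, d3⁰)` with respect to `(z1,z2,z3,z4)` equals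
`(3/8)·∏_{i<j}(zᵢ² − zⱼ²)`. -/
theorem stmt_5 :
    (Matrix.of fun i j : Fin 4 => MvPolynomial.pderiv j (![c1q0, c2q0, d2q0, d3q0] i)).det
      = C (3 / 8 : ℂ) *
          ∏ p ∈ Finset.univ.filter (fun p : Fin 4 × Fin 4 => p.1 < p.2),
            (X p.1 ^ 2 - X p.2 ^ 2) := by
  rw [show (Finset.univ.filter (fun p : Fin 4 × Fin 4 => p.1 < p.2)) =
    {((0:Fin 4),(1:Fin 4)),(0,2),(0,3),(1,2),(1,3),(2,3)} from by decide]
  have hrows : (Matrix.of fun i j : Fin 4 => MvPolynomial.pderiv j (![c1q0, c2q0, d2q0, d3q0] i))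
      = Matrix.of fun i j : Fin 4 =>
          (![C (-12:ℂ), C (1/4:ℂ), C (1/48:ℂ), C (1/16:ℂ)] i) *
            (Matrix.of fun i j : Fin 4 => MvPolynomial.pderiv j (![I2, P2, P3, P4] i)) i j := by
    ext i j
    fin_cases i <;>
      simp [hc1, hc2, hd2, hd3]
  rw [hrows, Matrix.det_mul_column, hfact, Matrix.det_mul, detAm, detJm,
    Fin.prod_univ_four]
  simp only [Matrix.cons_val_zero, Matrix.cons_val_one, Matrix.head_cons, Matrix.cons_val_two,
    Matrix.cons_val_three, Matrix.tail_cons, ← map_mul, ← mul_assoc]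
  norm_num
end

section
/- The four polynomials I2, I4, I6, Ĩ4 in ℂ[z1,z2,z3,z4] are algebraically independent over ℂ. -/
open MvPolynomial Complex

/-! Substituting `zᵢ²` for `zᵢ` in the elementary symmetric polynomials `e₁, …, e₄` gives
`I2, I4, I6, Ĩ4²`. The `eₖ` are algebraically independent and this substitution is injective, so
`I2, I4, I6, Ĩ4²` are algebraically independent. A relation among `I2, I4, I6, Ĩ4` would make `Ĩ4`,
hence `Ĩ4²`, algebraic over `ℂ[I2, I4, I6]`. -/

theorem AlgebraicIndependent.of_update_pow {R A ι : Type*} [CommRing R] [CommRing A]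
    [NoZeroDivisors A] [Algebra R A] [DecidableEq ι] {x : ι → A} {i : ι} {k : ℕ}
    (h : AlgebraicIndependent R (Function.update x i (x i ^ k))) :
    AlgebraicIndependent R x := by
  set y : {j // j ≠ i} → A := fun j ↦ x j
  have elim_iff (b : A) : AlgebraicIndependent R (Function.update x i b) ↔
      AlgebraicIndependent R (fun o : Option {j // j ≠ i} ↦ o.elim b y) := by
    refine (algebraicIndependent_equiv' (Equiv.optionSubtypeNe i) ?_).symm
    funext o
    rcases o with _ | ⟨j, hj⟩
    · simp
    · simp [y, hj]
  rw [← Function.update_eq_self i x, elim_iff]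
  rw [elim_iff] at h
  have hy : AlgebraicIndependent R y := h.comp some (Option.some_injective _)
  rw [hy.option_iff_transcendental] at h ⊢
  exact fun halg ↦ h (halg.pow k)

namespace MvPolynomial

variable {σ R : Type*} [Fintype σ] [CommRing R]

theorem algebraicIndependent_esymm {n : ℕ} (hn : n ≤ Fintype.card σ) :
    AlgebraicIndependent R (fun k : Fin n ↦ esymm σ R (k + 1)) := by
  rw [algebraicIndependent_iff_injective_aeval]
  have h : ⇑(aeval fun k : Fin n ↦ esymm σ R (k + 1)) = Subtype.val ∘ esymmAlgHom σ R n := by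
    funext p
    exact (esymmAlgHom_apply p).symm
  rw [h]
  exact Subtype.val_injective.comp (esymmAlgHom_injective R hn)

theorem esymm_card : esymm σ R (Fintype.card σ) = ∏ i, X i := by
  simp [esymm, ← Finset.card_univ, Finset.powersetCard_self]

end MvPolynomial

theorem expand_two_esymm_fin_four :
    (fun k : Fin 4 ↦ expand 2 (esymm (Fin 4) ℂ (k + 1))) = ![I2, I4, I6, I4t ^ 2] := by
  funext k
  fin_cases k
  · simp [esymm_one, I2]
  · rw [esymm, I4, show Finset.powersetCard 2 (Finset.univ : Finset (Fin 4)) =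
        {{0, 1}, {0, 2}, {0, 3}, {1, 2}, {1, 3}, {2, 3}} from by decide,
      show Finset.univ.filter (fun p : Fin 4 × Fin 4 ↦ p.1 < p.2) =
        {(0, 1), (0, 2), (0, 3), (1, 2), (1, 3), (2, 3)} from by decide]
    simp +decide
  · rw [esymm, I6, show Finset.powersetCard 3 (Finset.univ : Finset (Fin 4)) =
        {{0, 1, 2}, {0, 1, 3}, {0, 2, 3}, {1, 2, 3}} from by decide,
      show Finset.univ.filter
          (fun p : Fin 4 × Fin 4 × Fin 4 ↦ p.1 < p.2.1 ∧ p.2.1 < p.2.2) =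
        {(0, 1, 2), (0, 1, 3), (0, 2, 3), (1, 2, 3)} from by decide]
    simp +decide [mul_assoc]
  · show expand 2 (esymm (Fin 4) ℂ (Fintype.card (Fin 4))) = I4t ^ 2
    rw [esymm_card]
    simp [I4t, Finset.prod_pow]

/-- The four polynomials `I2, I4, I6, Ĩ4` are algebraically independent over ℂ. -/
theorem stmt_17 :
    AlgebraicIndependent ℂ (![I2, I4, I6, I4t] : Fin 4 → MvPolynomial (Fin 4) ℂ) := by
  have h_sq : AlgebraicIndependent ℂ ![I2, I4, I6, I4t ^ 2] := by
    rw [← expand_two_esymm_fin_four]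
    exact (algebraicIndependent_esymm le_rfl).map' (expand_injective two_pos)
  refine AlgebraicIndependent.of_update_pow (i := 3) (k := 2) ?_
  convert h_sq using 1
  funext i
  fin_cases i <;> rfl
end
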